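/- For all natural numbers x, y and every natural number j ≥ 1, one has e((y mod 2^j)·x / 2^j) = ∏_{m=1}^{j} e(x_m · (y mod 2^{j+1−m}) / 2^{j+1−m}), where x_m ∈ {0,1} denotes the m-th least significant bit of x. (This is the decomposition M_j(y,x) = Q_1(y)^{x_j} ⋯ Q_{j−1}(y)^{x_2} Q_j(y)^{x_1} of the multiply-add phase operator into binary-fraction phase gates controlled by the classical bits of x.) -/
import Mathlib


/-- `e θ = exp(2πiθ)`. -/
noncomputable def e (θ : ℝ) : ℂ := Complex.exp (2 * Real.pi * Complex.I * θ)

lemma e_add (a b : ℝ) : e (a + b) = e a * e b := by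
  simp [e, mul_add, Complex.exp_add]

lemma e_nat (n : ℕ) : e n = 1 := by
  have := Complex.exp_int_mul_two_pi_mul_I (n : ℤ)
  simpa [e, mul_comm, mul_assoc, mul_left_comm] using this

lemma e_sum {ι : Type*} (s : Finset ι) (f : ι → ℝ) :
    e (∑ i ∈ s, f i) = ∏ i ∈ s, e (f i) := by
  classical
  induction s using Finset.cons_induction with
  | empty => simp [e]
  | cons a s ha ih => rw [Finset.sum_cons, e_add, ih, Finset.prod_cons]

lemma e_mod {n : ℕ} (hn : 0 < n) :
    ∀ a b : ℕ, a ≡ b [MOD n] → e ((a : ℝ) / n) = e ((b : ℝ) / n) := by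
  have key : ∀ a b : ℕ, b ≤ a → a ≡ b [MOD n] → e ((a : ℝ) / n) = e ((b : ℝ) / n) := by
    intro a b hba h
    obtain ⟨k, hk⟩ := (Nat.modEq_iff_dvd' hba).mp h.symm
    have ha : a = b + n * k := by omega
    subst ha
    have : ((b + n * k : ℕ) : ℝ) / n = (b : ℝ) / n + (k : ℕ) := by
      have hn' : (n : ℝ) ≠ 0 := by positivity
      rw [Nat.cast_add, Nat.cast_mul, add_div, mul_comm, mul_div_assoc, div_self hn', mul_one]
    rw [this, e_add, e_nat, mul_one]
  intro a b h
  rcases le_total b a with hba | hab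
  · exact key a b hba h
  · exact (key b a hab h.symm).symm

lemma bitsum (x : ℕ) : ∀ j : ℕ,
    ∑ m ∈ Finset.Icc 1 j, (x / 2 ^ (m - 1) % 2) * 2 ^ (m - 1) = x % 2 ^ j := by
  intro j
  induction j with
  | zero => simp [Nat.mod_one]
  | succ j ih =>
    have hins : Finset.Icc 1 (j + 1) = insert (j + 1) (Finset.Icc 1 j) := by
      ext k
      simp only [Finset.mem_Icc, Finset.mem_insert]
      omega
    rw [hins, Finset.sum_insert (by simp), ih]
    have h1 : x % 2 ^ j + 2 ^ j * (x / 2 ^ j % 2) = x % 2 ^ (j + 1) := by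
      have hx : x = (x % 2 ^ j + 2 ^ j * (x / 2 ^ j % 2)) + 2 ^ (j + 1) * (x / 2 ^ j / 2) := by
        have h3 : 2 * (x / 2 ^ j / 2) + x / 2 ^ j % 2 = x / 2 ^ j :=
          Nat.div_add_mod (x / 2 ^ j) 2
        calc x = 2 ^ j * (x / 2 ^ j) + x % 2 ^ j := (Nat.div_add_mod x (2 ^ j)).symm
          _ = 2 ^ j * (2 * (x / 2 ^ j / 2) + x / 2 ^ j % 2) + x % 2 ^ j := by rw [h3]
          _ = (x % 2 ^ j + 2 ^ j * (x / 2 ^ j % 2)) + 2 ^ (j + 1) * (x / 2 ^ j / 2) := by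
              ring
      have hlt : x % 2 ^ j + 2 ^ j * (x / 2 ^ j % 2) < 2 ^ (j + 1) := by
        have hr : x % 2 ^ j < 2 ^ j := Nat.mod_lt _ (by positivity)
        have hb : x / 2 ^ j % 2 < 2 := Nat.mod_lt _ (by norm_num)
        have hp : (2 : ℕ) ^ (j + 1) = 2 * 2 ^ j := by ring
        have hbb : 2 ^ j * (x / 2 ^ j % 2) ≤ 2 ^ j * 1 :=
          Nat.mul_le_mul_left _ (by omega)
        omega
      conv_rhs => rw [hx]
      rw [Nat.add_mul_mod_self_left, Nat.mod_eq_of_lt hlt]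
    simp only [Nat.add_sub_cancel]
    rw [← h1]
    ring

set_option maxHeartbeats 1000000 in
/-- Decomposition `M_j(y,x) = Q_1(y)^{x_j} ⋯ Q_j(y)^{x_1}`: for `j ≥ 1`,
`e((y mod 2^j)·x / 2^j) = ∏_{m=1}^j e(x_m · (y mod 2^(j+1−m)) / 2^(j+1−m))`,
where `x_m = (x / 2^(m-1)) % 2` is the `m`-th least significant bit of `x`. -/
theorem m_gate_decomposition (x y j : ℕ) (hj : 1 ≤ j) :
    e ((((y % 2 ^ j) * x : ℕ) : ℝ) / (2 ^ j : ℝ)) =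
      ∏ m ∈ Finset.Icc 1 j,
        e ((((x / 2 ^ (m - 1) % 2) * (y % 2 ^ (j + 1 - m)) : ℕ) : ℝ)
            / (2 ^ (j + 1 - m) : ℝ)) := by
  -- rewrite each factor with denominator 2^j
  have hfac : ∀ m ∈ Finset.Icc 1 j,
      e ((((x / 2 ^ (m - 1) % 2) * (y % 2 ^ (j + 1 - m)) : ℕ) : ℝ)
            / (2 ^ (j + 1 - m) : ℝ))
        = e ((((x / 2 ^ (m - 1) % 2) * (y % 2 ^ (j + 1 - m)) * 2 ^ (m - 1) : ℕ) : ℝ)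
            / (2 ^ j : ℝ)) := by
    intro m hm
    simp only [Finset.mem_Icc] at hm
    congr 1
    have hpow : (2 : ℝ) ^ (j + 1 - m) * 2 ^ (m - 1) = 2 ^ j := by
      rw [← pow_add]
      congr 1
      omega
    have h1 : (2 : ℝ) ^ (j + 1 - m) ≠ 0 := by positivity
    have h2 : (2 : ℝ) ^ j ≠ 0 := by positivity
    rw [div_eq_div_iff h1 h2]
    push_cast
    rw [← hpow]
    ring
  rw [Finset.prod_congr rfl hfac, ← e_sum]
  have hsum : ∑ m ∈ Finset.Icc 1 j,
      (((x / 2 ^ (m - 1) % 2) * (y % 2 ^ (j + 1 - m)) * 2 ^ (m - 1) : ℕ) : ℝ) / (2 ^ j : ℝ)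
      = ((∑ m ∈ Finset.Icc 1 j,
          (x / 2 ^ (m - 1) % 2) * (y % 2 ^ (j + 1 - m)) * 2 ^ (m - 1) : ℕ) : ℝ) / (2 ^ j : ℝ) := by
    rw [Nat.cast_sum, Finset.sum_div]
  rw [hsum]
  have hcast : ((2 ^ j : ℕ) : ℝ) = (2 ^ j : ℝ) := by push_cast; rfl
  rw [← hcast]
  apply e_mod (n := 2 ^ j) (by positivity)
  -- now a Nat.ModEq statement
  rw [← ZMod.natCast_eq_natCast_iff]
  have hterm : ∀ m ∈ Finset.Icc 1 j,
      ((x / 2 ^ (m - 1) % 2 * (y % 2 ^ (j + 1 - m)) * 2 ^ (m - 1) : ℕ) : ZMod (2 ^ j))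
        = ((x / 2 ^ (m - 1) % 2 : ℕ) : ZMod (2 ^ j)) * (2 : ZMod (2 ^ j)) ^ (m - 1)
            * (y : ZMod (2 ^ j)) := by
    intro m hm
    simp only [Finset.mem_Icc] at hm
    have hy : y = 2 ^ (j + 1 - m) * (y / 2 ^ (j + 1 - m)) + y % 2 ^ (j + 1 - m) :=
      (Nat.div_add_mod y (2 ^ (j + 1 - m))).symm
    have h2 : (2 : ZMod (2 ^ j)) = ((2 : ℕ) : ZMod (2 ^ j)) := by push_cast; rfl
    have hz : ((2 : ZMod (2 ^ j)) ^ (j + 1 - m)) * ((2 : ZMod (2 ^ j)) ^ (m - 1)) = 0 := by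
      rw [← pow_add, show j + 1 - m + (m - 1) = j by omega, h2, ← Nat.cast_pow,
        ZMod.natCast_self]
    conv_rhs => rw [hy]
    push_cast
    linear_combination (-((x / 2 ^ (m - 1) % 2 : ℕ) : ZMod (2 ^ j))
      * ((y / 2 ^ (j + 1 - m) : ℕ) : ZMod (2 ^ j))) * hz
  rw [Nat.cast_sum, Finset.sum_congr rfl hterm, ← Finset.sum_mul]
  have hb : (∑ m ∈ Finset.Icc 1 j,
      ((x / 2 ^ (m - 1) % 2 : ℕ) : ZMod (2 ^ j)) * (2 : ZMod (2 ^ j)) ^ (m - 1))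
      = (x : ZMod (2 ^ j)) := by
    have h1 : (((∑ m ∈ Finset.Icc 1 j, x / 2 ^ (m - 1) % 2 * 2 ^ (m - 1)) : ℕ) : ZMod (2 ^ j))
        = ∑ m ∈ Finset.Icc 1 j,
          ((x / 2 ^ (m - 1) % 2 : ℕ) : ZMod (2 ^ j)) * (2 : ZMod (2 ^ j)) ^ (m - 1) := by
      push_cast
      rfl
    rw [← h1, bitsum, ZMod.natCast_mod]
  rw [hb]
  push_cast [ZMod.natCast_mod]
  ring
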